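/- Let L: ℝ^m → ℝ be ν-strongly convex and differentiable, Φ: ℝ^m → ℝ convex, f† the minimizer of L + Φ, and f̂ a point satisfying f̂ = Prox_η(f̂ − η Ĝ(f̂)) for some η > 0 and map Ĝ. Then ‖f̂ − f†‖₂² ≤ (1/ν)⟨f̂ − f†, ∇L(f̂) − Ĝ(f̂)⟩. -/

import Mathlib

open Set InnerProductSpace

/-!
Write `d = fhat - fdag`. Strong convexity makes `gradL` strongly monotone:
`ν ‖d‖² ≤ ⟪gradL fhat - gradL fdag, d⟫`. The first-order optimality condition of `fdag` for
`L + Φ` gives `Φ fdag - Φ fhat ≤ ⟪gradL fdag, d⟫`, and since `fhat` minimises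
`‖(fhat - η Ghat fhat) - ·‖² / (2η) + Φ`, whose smooth part has gradient `Ghat fhat` at `fhat`,
the same condition gives `Φ fhat - Φ fdag ≤ -⟪Ghat fhat, d⟫`. Adding the three inequalities
yields `ν ‖d‖² ≤ ⟪d, gradL fhat - Ghat fhat⟫`.
-/

variable {E : Type*} [NormedAddCommGroup E] [InnerProductSpace ℝ E] [CompleteSpace E]
  {F G : E → ℝ} {f' g' x y : E}

theorem HasGradientAt.neg (hF : HasGradientAt F f' x) : HasGradientAt (fun z => -F z) (-f') x := by
  rw [hasGradientAt_iff_hasFDerivAt, map_neg]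
  exact hF.hasFDerivAt.neg

theorem HasGradientAt.sub (hF : HasGradientAt F f' x) (hG : HasGradientAt G g' x) :
    HasGradientAt (fun z => F z - G z) (f' - g') x := by
  rw [hasGradientAt_iff_hasFDerivAt, map_sub]
  exact hF.hasFDerivAt.sub hG.hasFDerivAt

theorem HasGradientAt.const_mul (c : ℝ) (hF : HasGradientAt F f' x) :
    HasGradientAt (fun z => c * F z) (c • f') x := by
  rw [hasGradientAt_iff_hasFDerivAt, map_smul]
  exact hF.hasFDerivAt.const_mul c

theorem hasGradientAt_norm_sub_sq (u x : E) :
    HasGradientAt (fun z => ‖z - u‖ ^ 2) ((2 : ℝ) • (x - u)) x := by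
  refine ((hasFDerivAt_id x).sub_const u).norm_sq.congr_fderiv ?_
  ext v
  simp

theorem HasGradientAt.le_inner_of_forall_add_mul_le {c : ℝ} (hF : HasGradientAt F f' x)
    (h : ∀ t ∈ Icc (0 : ℝ) 1, F x + t * c ≤ F (x + t • (y - x))) : c ≤ inner ℝ f' (y - x) := by
  set φ : ℝ → ℝ := fun t => F (x + t • (y - x)) - t * c
  have hmin : IsLocalMinOn φ (Icc 0 1) 0 :=
    IsMinOn.localize fun t ht => by simp [φ]; linarith [h t ht]
  have hline : HasDerivAt (fun t : ℝ => x + t • (y - x)) (y - x) 0 := by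
    simpa using ((hasDerivAt_id (0 : ℝ)).smul_const (y - x)).const_add x
  have hφ : HasDerivAt φ (inner ℝ f' (y - x) - c) 0 := by
    have := (hF.hasFDerivAt.comp_hasDerivAt_of_eq 0 hline (by simp)).sub (hasDerivAt_mul_const c)
    rwa [toDual_apply_apply] at this
  have := hmin.hasFDerivWithinAt_nonneg hφ.hasFDerivAt.hasFDerivWithinAt
    (mem_posTangentConeAt_of_segment_subset (y := 1) (by simp [segment_eq_Icc]))
  simpa using this

theorem ConvexOn.sub_le_inner_of_forall_le_add {Φ : E → ℝ} (hΦ : ConvexOn ℝ univ Φ)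
    (hF : HasGradientAt F f' x) (hmin : ∀ z, F x + Φ x ≤ F z + Φ z) (y : E) :
    Φ x - Φ y ≤ inner ℝ f' (y - x) := by
  refine hF.le_inner_of_forall_add_mul_le fun t ⟨ht₀, ht₁⟩ => ?_
  have hconv := hΦ.2 (mem_univ x) (mem_univ y) (sub_nonneg.2 ht₁) ht₀ (sub_add_cancel 1 t)
  rw [show (1 - t) • x + t • y = x + t • (y - x) by module, smul_eq_mul, smul_eq_mul] at hconv
  linarith [hmin (x + t • (y - x))]

theorem ConvexOn.inner_le_sub_of_hasGradientAt (hF : ConvexOn ℝ univ F)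
    (hF' : HasGradientAt F f' x) (y : E) : inner ℝ f' (y - x) ≤ F y - F x := by
  -- `x` trivially minimises `-F + F`.
  have := hF.sub_le_inner_of_forall_le_add hF'.neg (fun z => by simp) y
  rw [inner_neg_left] at this
  linarith

theorem ConvexOn.inner_sub_gradient_nonneg (hF : ConvexOn ℝ univ F)
    (hx : HasGradientAt F f' x) (hy : HasGradientAt F g' y) : 0 ≤ inner ℝ (f' - g') (x - y) := by
  have hxy := hF.inner_le_sub_of_hasGradientAt hx y
  have hyx := hF.inner_le_sub_of_hasGradientAt hy x
  rw [← neg_sub x y, inner_neg_right] at hxy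
  rw [inner_sub_left]
  linarith

theorem StrongConvexOn.mul_norm_sq_le_inner_sub_gradient {ν : ℝ} (hF : StrongConvexOn univ ν F)
    (hx : HasGradientAt F f' x) (hy : HasGradientAt F g' y) :
    ν * ‖x - y‖ ^ 2 ≤ inner ℝ (f' - g') (x - y) := by
  have hgrad : ∀ {z h}, HasGradientAt F h z →
      HasGradientAt (fun w => F w - ν / 2 * ‖w‖ ^ 2) (h - ν • z) z := by
    intro z h hz
    have hsq : HasGradientAt (fun w => ‖w‖ ^ 2) ((2 : ℝ) • z) z := by
      simpa using hasGradientAt_norm_sub_sq 0 z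
    convert hz.sub (hsq.const_mul (ν / 2)) using 2
    module
  have := (strongConvexOn_iff_convex.1 hF).inner_sub_gradient_nonneg (hgrad hx) (hgrad hy)
  rw [show f' - ν • x - (g' - ν • y) = (f' - g') - ν • (x - y) by module, inner_sub_left,
    real_inner_smul_left, real_inner_self_eq_norm_sq] at this
  linarith

theorem ConvexOn.sub_le_inner_of_eq_prox {Φ : E → ℝ} {P : E → E} {η : ℝ} {v : E}
    (hΦ : ConvexOn ℝ univ Φ) (hη : η ≠ 0)
    (hP : ∀ u z, 1 / (2 * η) * ‖u - P u‖ ^ 2 + Φ (P u) ≤ 1 / (2 * η) * ‖u - z‖ ^ 2 + Φ z)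
    (hfix : x = P (x - η • v)) (y : E) : Φ x - Φ y ≤ inner ℝ v (y - x) := by
  set u := x - η • v
  have hq : HasGradientAt (fun z => 1 / (2 * η) * ‖z - u‖ ^ 2) v x := by
    convert (hasGradientAt_norm_sub_sq u x).const_mul (1 / (2 * η)) using 1
    rw [sub_sub_cancel, smul_smul, smul_smul, one_div_mul_eq_div,
      div_mul_cancel_left₀ two_ne_zero, inv_mul_cancel₀ hη, one_smul]
  refine hΦ.sub_le_inner_of_forall_le_add hq (fun z => ?_) y
  simpa only [norm_sub_rev _ u, ← hfix] using hP u z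

/-- Estimation error bound for a RaT fixed point under `ν`-strong convexity of the loss. -/
theorem rat_estimation_bound (m : ℕ)
    (L Φ : EuclideanSpace ℝ (Fin m) → ℝ) (ν : ℝ) (hν : 0 < ν)
    (hL : StrongConvexOn Set.univ ν L)
    (gradL Ghat : EuclideanSpace ℝ (Fin m) → EuclideanSpace ℝ (Fin m))
    (hgradL : ∀ f, HasGradientAt L (gradL f) f)
    (hΦ : ConvexOn ℝ Set.univ Φ)
    (fdag : EuclideanSpace ℝ (Fin m))
    (hfdag : ∀ f, L fdag + Φ fdag ≤ L f + Φ f)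
    (η : ℝ) (hη : 0 < η)
    (P : EuclideanSpace ℝ (Fin m) → EuclideanSpace ℝ (Fin m))
    (hP : ∀ u f, 1 / (2 * η) * ‖u - P u‖ ^ 2 + Φ (P u)
        ≤ 1 / (2 * η) * ‖u - f‖ ^ 2 + Φ f)
    (fhat : EuclideanSpace ℝ (Fin m))
    (hfix : fhat = P (fhat - η • Ghat fhat)) :
    ‖fhat - fdag‖ ^ 2 ≤ (1 / ν) * (inner ℝ (fhat - fdag) (gradL fhat - Ghat fhat) : ℝ) := by
  have hmono := hL.mul_norm_sq_le_inner_sub_gradient (hgradL fhat) (hgradL fdag)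
  have hopt := hΦ.sub_le_inner_of_forall_le_add (hgradL fdag) hfdag fhat
  have hprox := hΦ.sub_le_inner_of_eq_prox hη.ne' hP hfix fdag
  have hsplit : inner ℝ (fhat - fdag) (gradL fhat - Ghat fhat)
      = inner ℝ (gradL fhat - gradL fdag) (fhat - fdag) + inner ℝ (gradL fdag) (fhat - fdag)
        + inner ℝ (Ghat fhat) (fdag - fhat) := by
    rw [← neg_sub fhat fdag, inner_neg_right, real_inner_comm, inner_sub_left, inner_sub_left]
    ring
  rw [one_div_mul_eq_div, le_div_iff₀ hν, hsplit]
  linarith
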